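/- For the 3×3 matrix H = [[0,1,0],[1,ζ,1],[0,1,0]] with ζ real, the eigenvalues are 0, ζ/2 - √(ζ²+8)/2, and ζ/2 + √(ζ²+8)/2, and with p_max defined via its orthonormal eigenvectors as p_max(i,j) = (Σ_k |⟨e_i,v_k⟩⟨v_k,e_j⟩|)², one has p_max(1,3) = 1 for all ζ and p_max(1,2) → 0 as ζ → ∞. -/

import Mathlib

/-- Single-excitation Hamiltonian of a 3-spin XX chain with bias ζ on the central spin. -/
def H3 (ζ : ℝ) : Matrix (Fin 3) (Fin 3) ℝ :=
  Matrix.of ![![0, 1, 0], ![1, ζ, 1], ![0, 1, 0]]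

/-- The three eigenvalues of `H3 ζ`. -/
noncomputable def mu3 (ζ : ℝ) : Fin 3 → ℝ :=
  ![ζ / 2 - Real.sqrt (ζ ^ 2 + 8) / 2, 0, ζ / 2 + Real.sqrt (ζ ^ 2 + 8) / 2]

/-!
The end spins `0` and `2` enter `H3 ζ` symmetrically, so the eigenvector of the dark eigenvalue
`0` vanishes on the central spin, while the other two eigenvectors are symmetric. Since the rows
of `v`, and hence its columns, are orthonormal, this forces `∑ₖ |v k 0 * v k 2| = 1` for every
bias. As `mu3 ζ 0 * mu3 ζ 2 = -2` and `mu3 ζ 2 → ∞`, the eigenvalue `mu3 ζ 0` tends to `0`, and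
the eigen-equations `v k 1 = mu3 ζ k * v k 0` bound the overlaps `|v k 0 * v k 1|` by multiples
of `|mu3 ζ 0|`.
-/

open Filter Topology Matrix

theorem sum_mul_eq_ite_of_sum_mul_eq_ite {n R : Type*} [Fintype n] [DecidableEq n]
    [CommRing R] {v : n → n → R} (h : ∀ k l, ∑ x, v k x * v l x = if k = l then 1 else 0)
    (i j : n) : ∑ k, v k i * v k j = if i = j then 1 else 0 := by
  have hrows : Matrix.of v * (Matrix.of v)ᵀ = 1 := by
    ext k l
    simpa [Matrix.mul_apply, Matrix.one_apply] using h k l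
  have hcols : (Matrix.of v)ᵀ * Matrix.of v = 1 := mul_eq_one_comm.mp hrows
  simpa [Matrix.mul_apply, Matrix.one_apply] using congrFun (congrFun hcols i) j

theorem abs_mul_le_abs_of_eq_mul {ι : Type*} [Fintype ι] {w : ι → ℝ}
    (hw : ∑ x, w x * w x = 1) {i j : ι} {c : ℝ} (h : w i = c * w j) :
    |w i * w j| ≤ |c| := by
  have hj : w j * w j ≤ 1 :=
    hw ▸ Finset.single_le_sum (f := fun x => w x * w x) (fun x _ => mul_self_nonneg (w x))
      (Finset.mem_univ j)
  rw [h, mul_assoc, abs_mul, abs_mul_self]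
  exact mul_le_of_le_one_right (abs_nonneg c) hj

section BiasedChain

variable {ζ μ : ℝ} {w : Fin 3 → ℝ}

theorem sq_sqrt_sq_add_eight (ζ : ℝ) : Real.sqrt (ζ ^ 2 + 8) ^ 2 = ζ ^ 2 + 8 :=
  Real.sq_sqrt (by positivity)

theorem det_smul_one_sub_H3 (ζ lam : ℝ) :
    (lam • (1 : Matrix (Fin 3) (Fin 3) ℝ) - H3 ζ).det
      = (lam - mu3 ζ 0) * (lam - mu3 ζ 1) * (lam - mu3 ζ 2) := by
  rw [det_fin_three]
  simp only [H3, mu3, Matrix.sub_apply, Matrix.smul_apply, one_apply, of_apply, cons_val',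
    cons_val_zero, cons_val_one, cons_val, cons_val_fin_one, smul_eq_mul, Fin.isValue, Fin.reduceEq,
    if_true, if_false]
  linear_combination (lam / 4) * sq_sqrt_sq_add_eight ζ

theorem mu3_one (ζ : ℝ) : mu3 ζ 1 = 0 := rfl

theorem mu3_zero_mul_mu3_two (ζ : ℝ) : mu3 ζ 0 * mu3 ζ 2 = -2 := by
  simp only [mu3, Fin.isValue, cons_val_zero, cons_val]
  linear_combination (-1 / 4 : ℝ) * sq_sqrt_sq_add_eight ζ

theorem mu3_zero_ne_zero (ζ : ℝ) : mu3 ζ 0 ≠ 0 :=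
  left_ne_zero_of_mul (by rw [mu3_zero_mul_mu3_two]; norm_num)

theorem mu3_two_ne_zero (ζ : ℝ) : mu3 ζ 2 ≠ 0 :=
  right_ne_zero_of_mul (by rw [mu3_zero_mul_mu3_two]; norm_num)

theorem le_mu3_two (ζ : ℝ) : ζ ≤ mu3 ζ 2 := by
  have : ζ ≤ Real.sqrt (ζ ^ 2 + 8) :=
    Real.le_sqrt_of_sq_le (by linarith)
  simp only [mu3, Fin.isValue, cons_val]
  linarith

theorem tendsto_mu3_zero_atTop : Tendsto (fun ζ => mu3 ζ 0) atTop (𝓝 0) := by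
  have htwo : Tendsto (fun ζ => mu3 ζ 2) atTop atTop :=
    tendsto_atTop_mono le_mu3_two tendsto_id
  have hprod (ζ : ℝ) : mu3 ζ 0 = -2 / mu3 ζ 2 := by
    rw [← mu3_zero_mul_mu3_two ζ, mul_div_cancel_right₀ _ (mu3_two_ne_zero ζ)]
  simpa only [hprod] using tendsto_const_nhds.div_atTop htwo

theorem H3_mulVec_eq_smul_iff :
    H3 ζ *ᵥ w = μ • w ↔
      w 1 = μ * w 0 ∧ w 0 + ζ * w 1 + w 2 = μ * w 1 ∧ w 1 = μ * w 2 := by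
  simp only [funext_iff, Fin.forall_fin_succ, IsEmpty.forall_iff, and_true]
  simp [H3, mulVec, dotProduct, Fin.sum_univ_three]

theorem apply_one_eq_zero_of_H3_mulVec_eq_zero (h : H3 ζ *ᵥ w = 0) : w 1 = 0 := by
  simpa using (H3_mulVec_eq_smul_iff (μ := 0)).mp (by rw [h, zero_smul]) |>.1

theorem apply_zero_eq_apply_two_of_H3_mulVec_eq_smul (hμ : μ ≠ 0) (h : H3 ζ *ᵥ w = μ • w) :
    w 0 = w 2 := by
  obtain ⟨h0, -, h2⟩ := H3_mulVec_eq_smul_iff.mp h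
  exact mul_left_cancel₀ hμ (h0 ▸ h2)

theorem sum_abs_mul_zero_two_eq_one {v : Fin 3 → Fin 3 → ℝ}
    (horth : ∀ k l, ∑ x, v k x * v l x = if k = l then 1 else 0)
    (heig : ∀ k, H3 ζ *ᵥ v k = mu3 ζ k • v k) :
    ∑ k, |v k 0 * v k 2| = 1 := by
  have h1 : v 1 1 = 0 :=
    apply_one_eq_zero_of_H3_mulVec_eq_zero (by rw [heig, mu3_one, zero_smul])
  have h0 : v 0 0 = v 0 2 :=
    apply_zero_eq_apply_two_of_H3_mulVec_eq_smul (mu3_zero_ne_zero ζ) (heig 0)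
  have h2 : v 2 0 = v 2 2 :=
    apply_zero_eq_apply_two_of_H3_mulVec_eq_smul (mu3_two_ne_zero ζ) (heig 2)
  have c00 := sum_mul_eq_ite_of_sum_mul_eq_ite horth 0 0
  have c22 := sum_mul_eq_ite_of_sum_mul_eq_ite horth 2 2
  have c02 := sum_mul_eq_ite_of_sum_mul_eq_ite horth 0 2
  have r11 := horth 1 1
  simp only [Fin.sum_univ_three, ← h0, ← h2, h1, Fin.reduceEq, if_true, if_false, mul_zero,
    add_zero] at c00 c22 c02 r11 ⊢
  -- the columns `0` and `2` now differ only in row `1`, which is a unit vector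
  have hcd : v 1 0 * v 1 2 = -(1 / 2) := by linarith
  rw [hcd, abs_mul_self, abs_mul_self, abs_neg, abs_of_pos one_half_pos]
  linarith

theorem sum_abs_mul_zero_one_le {v : Fin 3 → Fin 3 → ℝ}
    (horth : ∀ k l, ∑ x, v k x * v l x = if k = l then 1 else 0)
    (heig : ∀ k, H3 ζ *ᵥ v k = mu3 ζ k • v k) :
    ∑ k, |v k 0 * v k 1| ≤ 3 / 2 * |mu3 ζ 0| := by
  have hunit (k : Fin 3) : ∑ x, v k x * v k x = 1 := by simpa using horth k k
  have h0 : |v 0 1 * v 0 0| ≤ |mu3 ζ 0| :=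
    abs_mul_le_abs_of_eq_mul (hunit 0) (H3_mulVec_eq_smul_iff.mp (heig 0)).1
  have h1 : v 1 1 = 0 :=
    apply_one_eq_zero_of_H3_mulVec_eq_zero (by rw [heig, mu3_one, zero_smul])
  -- `mu3 ζ 2 = -2 / mu3 ζ 0` turns `v 2 1 = mu3 ζ 2 * v 2 0` around.
  have h2 : |v 2 0 * v 2 1| ≤ |-(mu3 ζ 0 / 2)| := by
    refine abs_mul_le_abs_of_eq_mul (hunit 2) ?_
    linear_combination mu3 ζ 0 / 2 * (H3_mulVec_eq_smul_iff.mp (heig 2)).1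
      + v 2 0 / 2 * mu3_zero_mul_mu3_two ζ
  rw [Fin.sum_univ_three, mul_comm (v 0 0), h1, mul_zero, abs_zero]
  rw [abs_neg, abs_div, abs_two] at h2
  linarith

end BiasedChain

theorem biased_three_chain
    (v : ℝ → Fin 3 → Fin 3 → ℝ)
    (horth : ∀ ζ, ∀ k l : Fin 3,
      ∑ x : Fin 3, v ζ k x * v ζ l x = if k = l then 1 else 0)
    (heig : ∀ ζ, ∀ k : Fin 3, (H3 ζ).mulVec (v ζ k) = mu3 ζ k • v ζ k)
    (pmax : ℝ → Fin 3 → Fin 3 → ℝ)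
    (hpmax : ∀ ζ i j, pmax ζ i j = (∑ k : Fin 3, |v ζ k i * v ζ k j|) ^ 2) :
    (∀ ζ lam : ℝ,
        (lam • (1 : Matrix (Fin 3) (Fin 3) ℝ) - H3 ζ).det
          = (lam - mu3 ζ 0) * (lam - mu3 ζ 1) * (lam - mu3 ζ 2)) ∧
    (∀ ζ, pmax ζ 0 2 = 1) ∧
    Filter.Tendsto (fun ζ => pmax ζ 0 1) Filter.atTop (nhds 0) := by
  refine ⟨det_smul_one_sub_H3, fun ζ => ?_, ?_⟩
  · rw [hpmax, sum_abs_mul_zero_two_eq_one (horth ζ) (heig ζ), one_pow]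
  · have hsum : Tendsto (fun ζ => ∑ k, |v ζ k 0 * v ζ k 1|) atTop (𝓝 0) :=
      squeeze_zero (fun _ => by positivity)
        (fun ζ => sum_abs_mul_zero_one_le (horth ζ) (heig ζ))
        (by simpa using tendsto_mu3_zero_atTop.abs.const_mul (3 / 2))
    simpa [hpmax] using hsum.pow 2
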